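/- arXiv:1304.0542 — 2 statements merged into one kernel-verified Lean document; each statement's English description precedes it below -/
import Mathlib

section
/- Let 0<p<1, φ>0, and let n ≥ 1 be an integer. On a probability space, let ℓ be a random variable with the Poisson distribution of mean −φ·ln(1−p), and let (u_i)_{i≥1} be an i.i.d. sequence with distribution Log(p), independent of ℓ; set S = Σ_{i=1}^{ℓ} u_i (the compound Poisson sum, with S = 0 when ℓ = 0). Then P(S = n) > 0, and for every integer j with 0 ≤ j ≤ n, the conditional probability satisfies P(ℓ = j | S = n) = F(n,j)·φ^j / Σ_{j'=1}^{n} F(n,j')·φ^{j'}. -/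
/-!
Conditionally on `ℓ = j`, `S` is a sum of `j` independent `Log(p)` variables, whose generating
function is `(-log (1 - p X) / L)^j` with `L = -log (1 - p)`. Since
`(-log (1 - X))^j = j! ∑ₙ F(n,j) Xⁿ`, this gives
`P(ℓ = j, S = n) = e^{-λ} (φL)^j / j! · j! F(n,j) pⁿ / L^j = e^{-λ} pⁿ F(n,j) φ^j`;
summing over `j` gives `P(S = n)`, and the common factor `e^{-λ} pⁿ` cancels in the quotient.
-/

open MeasureTheory ProbabilityTheory

/-- Normalized unsigned Stirling numbers of the first kind:
`F 0 0 = 1`, `F n 0 = 0` for `n > 0`, `F n j = 0` for `j > n`, and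
`F (n+1) j = (n/(n+1)) * F n j + (1/(n+1)) * F n (j-1)`. -/
noncomputable def F : ℕ → ℕ → ℝ
  | 0, 0 => 1
  | 0, _ + 1 => 0
  | _ + 1, 0 => 0
  | n + 1, j + 1 => ((n : ℝ) / (n + 1)) * F n (j + 1) + (1 / ((n : ℝ) + 1)) * F n j

open PowerSeries Finset

lemma F_zero_right_of_pos {n : ℕ} (hn : 0 < n) : F n 0 = 0 := by
  obtain ⟨m, rfl⟩ := Nat.exists_eq_add_one.mpr hn
  rfl

lemma succ_mul_F_succ_succ (n j : ℕ) :
    ((n : ℝ) + 1) * F (n + 1) (j + 1) = n * F n (j + 1) + F n j := by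
  rw [F]
  field_simp

lemma F_eq_zero_of_lt {n j : ℕ} (h : n < j) : F n j = 0 := by
  induction n generalizing j with
  | zero => obtain ⟨j, rfl⟩ := Nat.exists_eq_add_one.mpr h; rfl
  | succ n ih =>
    obtain ⟨j, rfl⟩ := Nat.exists_eq_add_one.mpr (by omega : 0 < j)
    rw [F, ih (by omega), ih (by omega), mul_zero, mul_zero, add_zero]

lemma F_nonneg (n j : ℕ) : 0 ≤ F n j := by
  induction n generalizing j with
  | zero => cases j <;> simp [F]
  | succ n ih =>
    cases j with
    | zero => rfl
    | succ j => rw [F]; have := ih j; have := ih (j + 1); positivity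

lemma F_self_pos (n : ℕ) : 0 < F n n := by
  induction n with
  | zero => simp [F]
  | succ n ih => rw [F, F_eq_zero_of_lt n.lt_succ_self]; positivity

/-- The power series `-log (1 - X) = ∑_{k ≥ 1} X^k / k` (its constant coefficient is `0⁻¹ = 0`). -/
noncomputable def negLogOneSub : ℝ⟦X⟧ := mk fun k => (k : ℝ)⁻¹

noncomputable def stirlingSeries (j : ℕ) : ℝ⟦X⟧ := mk fun n => F n j

lemma coeff_one_sub_X_mul_derivative {R : Type*} [CommRing R] (f : R⟦X⟧) (n : ℕ) :
    coeff n ((1 - X) * d⁄dX R f) = coeff (n + 1) f * (n + 1) - coeff n f * n := by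
  rcases n with _ | n
  · simp only [sub_mul, one_mul, map_sub, coeff_zero_X_mul, coeff_derivative]
    ring
  · simp [sub_mul, coeff_derivative, coeff_succ_X_mul]

lemma one_sub_X_mul_derivative_negLogOneSub : (1 - X) * d⁄dX ℝ negLogOneSub = 1 := by
  ext n
  rw [coeff_one_sub_X_mul_derivative, negLogOneSub, coeff_mk, coeff_mk, coeff_one]
  rcases n with _ | n
  · simp
  · push_cast
    field_simp
    simp

lemma one_sub_X_mul_derivative_stirlingSeries_succ (j : ℕ) :
    (1 - X) * d⁄dX ℝ (stirlingSeries (j + 1)) = stirlingSeries j := by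
  ext n
  simp only [coeff_one_sub_X_mul_derivative, stirlingSeries, coeff_mk]
  rw [mul_comm, succ_mul_F_succ_succ]
  ring

/-- Both `(-log (1 - X))^j / j!` and `∑ₙ F(n,j) Xⁿ` solve `(1 - X) G_j' = G_{j-1}` and vanish at
`0` for `j ≥ 1`. -/
lemma negLogOneSub_pow (j : ℕ) : negLogOneSub ^ j = (j.factorial : ℝ) • stirlingSeries j := by
  induction j with
  | zero =>
    ext n
    rcases n with _ | n <;> simp [stirlingSeries, F, coeff_one]
  | succ j ih =>
    have one_sub_X_ne_zero : (1 - X : ℝ⟦X⟧) ≠ 0 := fun h => by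
      simpa using congrArg constantCoeff h
    refine derivative.ext (mul_left_cancel₀ one_sub_X_ne_zero ?_) ?_
    · calc (1 - X) * d⁄dX ℝ (negLogOneSub ^ (j + 1))
          = ((j + 1 : ℕ) : ℝ⟦X⟧) * negLogOneSub ^ j * ((1 - X) * d⁄dX ℝ negLogOneSub) := by
            rw [derivative_pow, Nat.add_sub_cancel]; ring
        _ = ((j + 1).factorial : ℝ) • stirlingSeries j := by
            rw [one_sub_X_mul_derivative_negLogOneSub, ih, mul_one, ← nsmul_eq_mul,
              ← Nat.cast_smul_eq_nsmul ℝ, smul_smul, Nat.factorial_succ, Nat.cast_mul]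
        _ = (1 - X) * d⁄dX ℝ (((j + 1).factorial : ℝ) • stirlingSeries (j + 1)) := by
            rw [Derivation.map_smul, mul_smul_comm, one_sub_X_mul_derivative_stirlingSeries_succ]
    · simp [stirlingSeries, negLogOneSub, F]

lemma coeff_negLogOneSub_pow (n j : ℕ) : coeff n (negLogOneSub ^ j) = j.factorial * F n j := by
  simp [negLogOneSub_pow, stirlingSeries]

section GeneratingFunction

variable {Ω : Type*} [MeasurableSpace Ω] {μ : Measure Ω}

noncomputable def pgf (μ : Measure Ω) (V : Ω → ℕ) : ℝ⟦X⟧ := mk fun n => μ.real {ω | V ω = n}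

lemma pgf_zero [IsProbabilityMeasure μ] : pgf μ 0 = 1 := by
  ext n
  rcases n with _ | n <;> simp [pgf, coeff_one]

lemma pgf_add [IsFiniteMeasure μ] {V W : Ω → ℕ} (hV : Measurable V) (hW : Measurable W)
    (h : IndepFun V W μ) : pgf μ (V + W) = pgf μ V * pgf μ W := by
  ext n
  have hset : {ω | (V + W) ω = n} = ⋃ x ∈ antidiagonal n, V ⁻¹' {x.1} ∩ W ⁻¹' {x.2} := by
    ext ω
    simp
  rw [pgf, coeff_mk, coeff_mul, hset, measureReal_biUnion_finset]
  · refine sum_congr rfl fun x _ => ?_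
    simp only [pgf, coeff_mk, measureReal_def, h.measure_inter_preimage_eq_mul _ _
      (measurableSet_singleton _) (measurableSet_singleton _), ENNReal.toReal_mul]
    rfl
  · intro x _ y _ hxy
    refine Set.disjoint_left.mpr fun ω hx hy => hxy ?_
    simp only [Set.mem_inter_iff, Set.mem_preimage, Set.mem_singleton_iff] at hx hy
    exact Prod.ext (hx.1.symm.trans hy.1) (hx.2.symm.trans hy.2)
  · exact fun x _ => (hV (measurableSet_singleton _)).inter (hW (measurableSet_singleton _))

lemma pgf_sum [IsProbabilityMeasure μ] {ι : Type*} {U : ι → Ω → ℕ} (hU : ∀ i, Measurable (U i))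
    (h : iIndepFun U μ) (s : Finset ι) : pgf μ (∑ i ∈ s, U i) = ∏ i ∈ s, pgf μ (U i) := by
  classical
  induction s using Finset.induction_on with
  | empty => simp [pgf_zero]
  | insert i s hi ih =>
    rw [sum_insert hi, prod_insert hi, add_comm,
      pgf_add (by fun_prop) (hU i) (h.indepFun_finsetSum_of_notMem hU hi), ih, mul_comm]

end GeneratingFunction

section CompoundSum

variable {Ω : Type*} [MeasurableSpace Ω] {μ : Measure Ω} {N : Ω → ℕ} {U : ℕ → Ω → ℕ}

lemma measurable_randomSum (hN : Measurable N) (hU : ∀ i, Measurable (U i)) :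
    Measurable fun ω => ∑ i ∈ range (N ω), U i ω :=
  (measurable_from_prod_countable_left (f := fun q : Ω × ℕ => ∑ i ∈ range q.2, U i q.1)
    fun j => Finset.measurable_sum (range j) fun i _ => hU i).comp (measurable_id.prodMk hN)

lemma hasSum_measureReal_inter_eq [IsFiniteMeasure μ] (hN : Measurable N) {s : Set Ω}
    (hs : MeasurableSet s) : HasSum (fun j => μ.real (s ∩ {ω | N ω = j})) (μ.real s) := by
  have hunion : ⋃ j, s ∩ {ω | N ω = j} = s := by
    ext ω
    simp
  have hdisj : Pairwise (Function.onFun Disjoint fun j => s ∩ {ω | N ω = j}) :=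
    fun i j hij => Set.disjoint_left.mpr fun ω hi hj => hij (hi.2.symm.trans hj.2)
  have hmeas : ∀ j, MeasurableSet (s ∩ {ω | N ω = j}) :=
    fun j => hs.inter (hN (measurableSet_singleton j))
  have htsum := measure_iUnion (μ := μ) hdisj hmeas
  rw [hunion] at htsum
  rw [measureReal_def, htsum, ENNReal.tsum_toReal_eq fun _ => measure_ne_top _ _]
  exact ENNReal.hasSum_toReal (htsum ▸ measure_ne_top μ s)

/-- Conditionally on `N = j`, the random sum `∑_{i < N} Uᵢ` is the sum of `j` independent copies
of `U₀`, independent of `N`. -/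
lemma measureReal_randomSum_eq_inter_eq [IsProbabilityMeasure μ] (hN : Measurable N)
    (hU : ∀ i, Measurable (U i)) (hindep : iIndepFun (fun i : Option ℕ => Option.elim i N U) μ)
    {g : ℝ⟦X⟧} (hg : ∀ i, pgf μ (U i) = g) (j n : ℕ) :
    μ.real ({ω | ∑ i ∈ range (N ω), U i ω = n} ∩ {ω | N ω = j}) =
      μ.real {ω | N ω = j} * coeff n (g ^ j) := by
  have hmeas : ∀ i, Measurable (Option.elim i N U) := by
    rintro (_ | i)
    exacts [hN, hU i]
  have hsum : ∑ i ∈ (range j).map .some, Option.elim i N U = ∑ i ∈ range j, U i := sum_map _ _ _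
  have hind : IndepFun (∑ i ∈ range j, U i) N μ :=
    hsum ▸ hindep.indepFun_finsetSum_of_notMem hmeas (i := none) (by simp)
  have hpgf : pgf μ (∑ i ∈ range j, U i) = g ^ j := by
    rw [pgf_sum hU (hindep.precomp (g := some) (Option.some_injective ℕ)),
      prod_congr rfl fun i _ => hg i, prod_const, card_range]
  rw [sum_fn] at hind hpgf
  have hset : {ω | ∑ i ∈ range (N ω), U i ω = n} ∩ {ω | N ω = j} =
      {ω | ∑ i ∈ range j, U i ω = n} ∩ {ω | N ω = j} :=
    Set.ext fun ω => and_congr_left fun (hj : N ω = j) => by rw [Set.mem_ofPred_eq, hj]; rfl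
  rw [hset, ← hpgf, pgf, coeff_mk, mul_comm]
  simp only [measureReal_def, ← ENNReal.toReal_mul]
  exact congrArg _ (hind.measure_inter_preimage_eq_mul _ _ (measurableSet_singleton n)
    (measurableSet_singleton j))

end CompoundSum

noncomputable def logarithmicPGF (p : ℝ) : ℝ⟦X⟧ :=
  C (-Real.log (1 - p))⁻¹ * rescale p negLogOneSub

lemma coeff_logarithmicPGF_pow (p : ℝ) (n j : ℕ) :
    coeff n (logarithmicPGF p ^ j) =
      (-Real.log (1 - p))⁻¹ ^ j * p ^ n * (j.factorial * F n j) := by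
  rw [logarithmicPGF, mul_pow, ← map_pow, ← map_pow, coeff_C_mul, coeff_rescale,
    coeff_negLogOneSub_pow, mul_assoc]

lemma pgf_eq_logarithmicPGF {Ω : Type*} [MeasurableSpace Ω] {μ : Measure Ω} [IsFiniteMeasure μ]
    {p : ℝ} (hp0 : 0 < p) (hp1 : p < 1) {V : Ω → ℕ} (h0 : μ {ω | V ω = 0} = 0)
    (hdist : ∀ k : ℕ, 1 ≤ k →
      μ {ω | V ω = k} = ENNReal.ofReal (-p ^ k / ((k : ℝ) * Real.log (1 - p)))) :
    pgf μ V = logarithmicPGF p := by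
  have hlog : Real.log (1 - p) < 0 := Real.log_neg (by linarith) (by linarith)
  ext k
  rw [pgf, logarithmicPGF, coeff_mk, coeff_C_mul, coeff_rescale, negLogOneSub, coeff_mk,
    measureReal_def]
  rcases k with _ | k
  · simp [h0]
  · rw [hdist _ k.succ_pos, ENNReal.toReal_ofReal (div_nonneg_of_nonpos
      (neg_nonpos.mpr (by positivity)) (mul_nonpos_of_nonneg_of_nonpos (by positivity) hlog.le))]
    field_simp

/-- Let `ℓ` be Poisson with mean `λ = -φ ln(1-p)` and `(uᵢ)` i.i.d. logarithmic `Log(p)`,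
independent of `ℓ`, and let `S = ∑_{i<ℓ} uᵢ` be the compound Poisson sum. Then for `n ≥ 1`,
`P(S = n) > 0` and for `0 ≤ j ≤ n`,
`P(ℓ = j | S = n) = F(n,j) φ^j / ∑_{j'=1}^n F(n,j') φ^{j'}`. -/
theorem compound_poisson_conditional (p φ : ℝ) (hp0 : 0 < p) (hp1 : p < 1) (hφ : 0 < φ)
    (lam : ℝ) (hlam : lam = -φ * Real.log (1 - p))
    {Ω : Type*} [MeasurableSpace Ω] (P : Measure Ω) [IsProbabilityMeasure P]
    (ℓ : Ω → ℕ) (u : ℕ → Ω → ℕ)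
    (hℓmeas : Measurable ℓ) (humeas : ∀ i, Measurable (u i))
    (hℓdist : ∀ j : ℕ,
      P {ω | ℓ ω = j} = ENNReal.ofReal (Real.exp (-lam) * lam ^ j / (j.factorial : ℝ)))
    (hu0 : ∀ i, P {ω | u i ω = 0} = 0)
    (hudist : ∀ i, ∀ k : ℕ, 1 ≤ k →
      P {ω | u i ω = k} = ENNReal.ofReal (-p ^ k / ((k : ℝ) * Real.log (1 - p))))
    (hindep : iIndepFun (m := fun _ : Option ℕ => (inferInstance : MeasurableSpace ℕ))
      (fun i : Option ℕ => Option.elim i ℓ u) P)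
    (S : Ω → ℕ) (hS : ∀ ω, S ω = ∑ i ∈ Finset.range (ℓ ω), u i ω)
    (n : ℕ) (hn : 1 ≤ n) :
    0 < P {ω | S ω = n} ∧
      ∀ j : ℕ, j ≤ n →
        P[{ω | ℓ ω = j} | {ω | S ω = n}] =
          ENNReal.ofReal (F n j * φ ^ j / ∑ j' ∈ Finset.Icc 1 n, F n j' * φ ^ j') := by
  obtain rfl : S = fun ω => ∑ i ∈ range (ℓ ω), u i ω := funext hS
  beta_reduce
  set L := -Real.log (1 - p) with hL_def
  have hL : 0 < L := neg_pos.mpr (Real.log_neg (by linarith) (by linarith))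
  have hlamL : lam = φ * L := by rw [hlam, hL_def]; ring
  clear_value L
  have hjoint : ∀ j, P.real ({ω | ∑ i ∈ range (ℓ ω), u i ω = n} ∩ {ω | ℓ ω = j}) =
      Real.exp (-lam) * p ^ n * (F n j * φ ^ j) := fun j => by
    rw [measureReal_randomSum_eq_inter_eq hℓmeas humeas hindep
        (fun i => pgf_eq_logarithmicPGF hp0 hp1 (hu0 i) (hudist i)),
      coeff_logarithmicPGF_pow, ← hL_def, measureReal_def, hℓdist,
      ENNReal.toReal_ofReal (by rw [hlamL]; positivity), hlamL, mul_pow, inv_pow]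
    field_simp
  have hsum_pos : 0 < ∑ j ∈ Icc 1 n, F n j * φ ^ j :=
    sum_pos' (fun j _ => mul_nonneg (F_nonneg n j) (by positivity))
      ⟨n, mem_Icc.mpr ⟨hn, le_rfl⟩, mul_pos (F_self_pos n) (by positivity)⟩
  have hmS : MeasurableSet {ω | ∑ i ∈ range (ℓ ω), u i ω = n} :=
    measurable_randomSum hℓmeas humeas (measurableSet_singleton n)
  have hPS : P.real {ω | ∑ i ∈ range (ℓ ω), u i ω = n} =
      Real.exp (-lam) * p ^ n * ∑ j ∈ Icc 1 n, F n j * φ ^ j := by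
    refine (hasSum_measureReal_inter_eq hℓmeas hmS).unique ?_
    simp only [hjoint, mul_sum]
    refine hasSum_sum_of_ne_finset_zero fun j hj => ?_
    rcases Nat.eq_zero_or_pos j with rfl | hj0
    · rw [F_zero_right_of_pos hn, zero_mul, mul_zero]
    · rw [F_eq_zero_of_lt (by simp at hj; omega), zero_mul, mul_zero]
  refine ⟨?_, fun j _ => ?_⟩
  · rw [← ofReal_measureReal, hPS]
    exact ENNReal.ofReal_pos.mpr (by positivity)
  · rw [cond_apply hmS, ← ofReal_measureReal, ← ofReal_measureReal, hjoint, hPS,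
      ← ENNReal.ofReal_inv_of_pos (by positivity), ← ENNReal.ofReal_mul (by positivity)]
    congr 1
    field_simp
end

section
/- Let 0<p<1 and φ>0. Then for every natural number n, Σ_{j=0}^{∞} [e^{φ·ln(1−p)}·(−φ·ln(1−p))^j/j!]·μ_p^{∗j}({n}) = Γ(n+φ)/(n!·Γ(φ))·p^n·(1−p)^φ; that is, a compound Poisson sum of i.i.d. logarithmic Log(p) random variables, with Poisson mixing parameter −φ·ln(1−p), has the negative binomial distribution NB(φ,p). -/
/-! With `L = -log (1 - X)` and `c = -log (1 - p)`, the generating function of `Log(p)` is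
`L(pX) / c`, so that of its `j`-th convolution power is `(L(pX) / c) ^ j`, and the Poisson mixture
has generating function `e^{-φc} exp (φ L(pX)) = e^{-φc} (1 - pX)^{-φ}`. Formally, the coefficients
`b n` of `exp (φ L)` satisfy `(n + 1) b (n + 1) = (φ + n) b n`, which comes from differentiating
`L ^ j` with `L' = 1 / (1 - X)`; hence `b n = φ (φ + 1) ⋯ (φ + n - 1) / n! = Γ(n + φ) / (n! Γ(φ))`. -/

open MeasureTheory

/-- `j`-fold (additive) convolution power of a measure on `ℕ`, with the `0`-th power the
Dirac mass at `0`. -/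
noncomputable def convPow (μ : Measure ℕ) : ℕ → Measure ℕ
  | 0 => Measure.dirac 0
  | j + 1 => Measure.conv (convPow μ j) μ

section LogSeries

open PowerSeries Finset Nat

theorem coeff_mul_mk_one {R : Type*} [Semiring R] (f : R⟦X⟧) (n : ℕ) :
    coeff n (f * PowerSeries.mk 1) = ∑ m ∈ range (n + 1), coeff m f := by
  simp [coeff_mul, Finset.Nat.sum_antidiagonal_eq_sum_range_succ_mk]

variable {K : Type*} [Field K] [CharZero K]

variable (K) in
/-- The series of `-log (1 - X)`; its constant coefficient is `0` because `(0 : K)⁻¹ = 0`. -/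
noncomputable def logSeries : K⟦X⟧ := mk fun k => (k : K)⁻¹

theorem coeff_logSeries_pow_of_lt {j n : ℕ} (h : n < j) : coeff n (logSeries K ^ j) = 0 := by
  have hX : (X : K⟦X⟧) ∣ logSeries K := X_dvd_iff.2 (by simp [logSeries])
  exact X_pow_dvd_iff.1 (pow_dvd_pow_of_dvd hX j) n h

theorem derivative_logSeries : d⁄dX K (logSeries K) = PowerSeries.mk 1 := by
  ext n
  rw [coeff_derivative, logSeries, coeff_mk, coeff_mk]
  push_cast
  field_simp
  simp

/-- Coefficientwise form of `(L ^ (j + 1))' = (j + 1) L ^ j / (1 - X)`. -/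
theorem natCast_mul_coeff_logSeries_pow_succ (j n : ℕ) :
    n * coeff n (logSeries K ^ (j + 1)) = (j + 1) * ∑ m ∈ range n, coeff m (logSeries K ^ j) := by
  cases n with
  | zero => simp
  | succ n =>
    have h := congrArg (coeff n) (derivative_pow (logSeries K) (j + 1))
    rw [coeff_derivative, derivative_logSeries, add_tsub_cancel_right, mul_assoc,
      ← map_natCast (C (R := K)), coeff_C_mul, coeff_mul_mk_one] at h
    push_cast at h ⊢
    linear_combination h

/-- The `n`-th coefficient of `exp (a L) = (1 - X) ^ (-a)`, where `L = logSeries K`; the terms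
with `j > n` vanish by `coeff_logSeries_pow_of_lt`. -/
noncomputable def coeffExpLog (a : K) (n : ℕ) : K :=
  ∑ j ∈ range (n + 1), a ^ j / j ! * coeff n (logSeries K ^ j)

theorem coeffExpLog_eq_sum_of_lt (a : K) {n N : ℕ} (h : n < N) :
    coeffExpLog a n = ∑ j ∈ range N, a ^ j / j ! * coeff n (logSeries K ^ j) := by
  refine sum_subset (range_subset_range.2 h) fun j _ hjn => ?_
  rw [coeff_logSeries_pow_of_lt (by simpa using hjn), mul_zero]

theorem natCast_mul_coeffExpLog (a : K) (n : ℕ) :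
    n * coeffExpLog a n = a * ∑ m ∈ range n, coeffExpLog a m := by
  calc (n : K) * coeffExpLog a n
      = ∑ j ∈ range n, a ^ (j + 1) / (j + 1)! * (n * coeff n (logSeries K ^ (j + 1))) := by
        rw [coeffExpLog, mul_sum, sum_range_succ']
        cases n <;> simp [mul_left_comm]
    _ = a * ∑ j ∈ range n, ∑ m ∈ range n, a ^ j / j ! * coeff m (logSeries K ^ j) := by
        simp_rw [natCast_mul_coeff_logSeries_pow_succ, mul_sum]
        refine sum_congr rfl fun j _ => sum_congr rfl fun m _ => ?_
        push_cast [factorial_succ, pow_succ]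
        field_simp
    _ = a * ∑ m ∈ range n, coeffExpLog a m := by
        rw [sum_comm]
        congr 1
        exact sum_congr rfl fun m hm => (coeffExpLog_eq_sum_of_lt a (mem_range.1 hm)).symm

theorem coeffExpLog_succ (a : K) (n : ℕ) :
    (n + 1) * coeffExpLog a (n + 1) = (a + n) * coeffExpLog a n := by
  have h := natCast_mul_coeffExpLog a (n + 1)
  rw [sum_range_succ, mul_add, ← natCast_mul_coeffExpLog] at h
  push_cast at h
  linear_combination h

theorem coeffExpLog_eq_ascPochhammer (a : K) (n : ℕ) :
    coeffExpLog a n = (ascPochhammer K n).eval a / n ! := by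
  induction n with
  | zero => simp [coeffExpLog]
  | succ n ih =>
    have h := coeffExpLog_succ a n
    rw [ih] at h
    rw [ascPochhammer_succ_eval, factorial_succ]
    push_cast
    field_simp
    linear_combination h

end LogSeries

theorem Real.Gamma_add_nat_eq_ascPochhammer_mul {a : ℝ} (ha : ∀ k : ℕ, a ≠ -k) (n : ℕ) :
    Real.Gamma (n + a) = (ascPochhammer ℝ n).eval a * Real.Gamma a := by
  induction n with
  | zero => simp
  | succ n ih =>
    have hna : (n : ℝ) + a ≠ 0 := fun h => ha n (by linarith)
    rw [Nat.cast_succ, add_right_comm, Real.Gamma_add_one hna, ih, ascPochhammer_succ_eval]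
    ring

open PowerSeries Finset

theorem MeasureTheory.Measure.conv_singleton_eq_sum_antidiagonal (ρ ν : Measure ℕ) (n : ℕ) :
    (ρ ∗ ν) {n} = ∑ x ∈ antidiagonal n, ρ {x.1} * ν {x.2} := by
  have hfiber : (fun x : ℕ × ℕ => x.1 + x.2) ⁻¹' {n} = ↑(antidiagonal n) := by
    ext x; simp
  rw [Measure.conv, Measure.map_apply (measurable_of_countable _) (measurableSet_singleton n),
    hfiber, ← sum_measure_singleton]
  refine Finset.sum_congr rfl fun x _ => ?_
  rw [← Set.singleton_prod_singleton, Measure.prod_prod]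

noncomputable def pmfSeries (ν : Measure ℕ) : ℝ⟦X⟧ := PowerSeries.mk fun n => ν.real {n}

theorem pmfSeries_conv (ρ ν : Measure ℕ) [IsFiniteMeasure ρ] [IsFiniteMeasure ν] :
    pmfSeries (ρ ∗ ν) = pmfSeries ρ * pmfSeries ν := by
  ext n
  rw [pmfSeries, coeff_mk, coeff_mul, measureReal_def, Measure.conv_singleton_eq_sum_antidiagonal,
    ENNReal.toReal_sum fun x _ => ENNReal.mul_ne_top (measure_ne_top _ _) (measure_ne_top _ _)]
  simp [pmfSeries, measureReal_def]

instance isFiniteMeasure_convPow (μ : Measure ℕ) [IsFiniteMeasure μ] (j : ℕ) : IsFiniteMeasure (convPow μ j) := by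
  induction j with
  | zero => exact inferInstanceAs (IsFiniteMeasure (Measure.dirac 0))
  | succ j ih => exact inferInstanceAs (IsFiniteMeasure (convPow μ j ∗ μ))

theorem pmfSeries_convPow (μ : Measure ℕ) [IsFiniteMeasure μ] (j : ℕ) :
    pmfSeries (convPow μ j) = pmfSeries μ ^ j := by
  induction j with
  | zero =>
    ext n
    simp [pmfSeries, convPow, coeff_one, measureReal_def, Set.indicator, eq_comm, apply_ite]
  | succ j ih => rw [convPow, pmfSeries_conv, ih, pow_succ]

theorem coeff_pow_C_mul_rescale {R : Type*} [CommRing R] (b p : R) (f : R⟦X⟧) (j n : ℕ) :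
    coeff n ((C b * rescale p f) ^ j) = b ^ j * p ^ n * coeff n (f ^ j) := by
  rw [mul_pow, ← map_pow, ← map_pow, coeff_C_mul, coeff_rescale, mul_assoc]

theorem pmfSeries_eq_C_mul_rescale_logSeries {p : ℝ} (hp0 : 0 ≤ p) (hp1 : p ≤ 1) {μ : Measure ℕ}
    (hμ0 : μ {0} = 0)
    (hμ : ∀ k : ℕ, 1 ≤ k → μ {k} = ENNReal.ofReal (-p ^ k / ((k : ℝ) * Real.log (1 - p)))) :
    pmfSeries μ = C (-Real.log (1 - p))⁻¹ * rescale p (logSeries ℝ) := by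
  ext k
  rw [pmfSeries, coeff_mk, coeff_C_mul, coeff_rescale, logSeries, coeff_mk, measureReal_def]
  rcases Nat.eq_zero_or_pos k with rfl | hk
  · simp [hμ0]
  · have hlog : Real.log (1 - p) ≤ 0 := Real.log_nonpos (by linarith) (by linarith)
    rw [hμ k hk, ENNReal.toReal_ofReal]
    · ring
    · exact div_nonneg_of_nonpos (by simp; positivity)
        (mul_nonpos_of_nonneg_of_nonpos (by positivity) hlog)

section Logarithmic

variable {p : ℝ} (hp0 : 0 < p) (hp1 : p < 1) {μ : Measure ℕ} [IsFiniteMeasure μ]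
  (hμ0 : μ {0} = 0)
  (hμ : ∀ k : ℕ, 1 ≤ k → μ {k} = ENNReal.ofReal (-p ^ k / ((k : ℝ) * Real.log (1 - p))))
include hp0 hp1 hμ0 hμ

theorem pow_mul_measureReal_convPow_singleton (j n : ℕ) :
    (-Real.log (1 - p)) ^ j * (convPow μ j).real {n} = p ^ n * coeff n (logSeries ℝ ^ j) := by
  have hlog : -Real.log (1 - p) ≠ 0 := (neg_pos.2 (Real.log_neg (by linarith) (by linarith))).ne'
  rw [← coeff_mk n fun m => (convPow μ j).real {m}, ← pmfSeries, pmfSeries_convPow,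
    pmfSeries_eq_C_mul_rescale_logSeries hp0.le hp1.le hμ0 hμ, coeff_pow_C_mul_rescale,
    ← mul_assoc, ← mul_assoc, ← mul_pow, mul_inv_cancel₀ hlog, one_pow, one_mul]

theorem sum_poisson_mul_measureReal_convPow_singleton (φ : ℝ) (n : ℕ) :
    ∑ j ∈ range (n + 1), Real.exp (φ * Real.log (1 - p)) * (-φ * Real.log (1 - p)) ^ j /
        j.factorial * (convPow μ j).real {n} =
      Real.exp (φ * Real.log (1 - p)) * p ^ n * coeffExpLog φ n := by
  rw [coeffExpLog, mul_sum]
  refine sum_congr rfl fun j _ => ?_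
  rw [neg_mul_comm, mul_pow]
  linear_combination Real.exp (φ * Real.log (1 - p)) * φ ^ j / j.factorial *
    pow_mul_measureReal_convPow_singleton hp0 hp1 hμ0 hμ j n

end Logarithmic

/-- A compound Poisson sum of i.i.d. logarithmic `Log(p)` random variables, with Poisson
mixing parameter `-φ ln(1-p)`, has the negative binomial distribution `NB(φ, p)`:
for every `n : ℕ`,
`∑_j e^{φ ln(1-p)} (-φ ln(1-p))^j / j! ⬝ μ_p^{*j}{n} = Γ(n+φ)/(n! Γ(φ)) p^n (1-p)^φ`. -/
theorem compound_poisson_log_eq_negBinomial (p φ : ℝ) (hp0 : 0 < p) (hp1 : p < 1)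
    (hφ : 0 < φ) (μ : Measure ℕ) [IsProbabilityMeasure μ]
    (hμ0 : μ {0} = 0)
    (hμ : ∀ k : ℕ, 1 ≤ k → μ {k} = ENNReal.ofReal (-p ^ k / ((k : ℝ) * Real.log (1 - p))))
    (n : ℕ) :
    ∑' j : ℕ,
        ENNReal.ofReal (Real.exp (φ * Real.log (1 - p)) *
            (-φ * Real.log (1 - p)) ^ j / (j.factorial : ℝ)) * convPow μ j {n} =
      ENNReal.ofReal (Real.Gamma ((n : ℝ) + φ) / ((n.factorial : ℝ) * Real.Gamma φ) *
        p ^ n * (1 - p) ^ φ) := by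
  have hlog : Real.log (1 - p) < 0 := Real.log_neg (by linarith) (by linarith)
  have hweight (j : ℕ) :
      0 ≤ Real.exp (φ * Real.log (1 - p)) * (-φ * Real.log (1 - p)) ^ j / j.factorial := by
    have : 0 ≤ -φ * Real.log (1 - p) := by nlinarith
    positivity
  have hvanish (j : ℕ) (hj : j ∉ range (n + 1)) : (convPow μ j).real {n} = 0 := by
    have h := pow_mul_measureReal_convPow_singleton hp0 hp1 hμ0 hμ j n
    rw [coeff_logSeries_pow_of_lt (by simpa using hj), mul_zero] at h
    exact (mul_eq_zero.1 h).resolve_left (pow_ne_zero _ (neg_pos.2 hlog).ne')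
  rw [tsum_congr fun j => by rw [← ofReal_measureReal, ← ENNReal.ofReal_mul (hweight j)],
    tsum_eq_sum fun j hj => by rw [hvanish j hj, mul_zero, ENNReal.ofReal_zero],
    ← ENNReal.ofReal_sum_of_nonneg fun j _ => mul_nonneg (hweight j) measureReal_nonneg,
    sum_poisson_mul_measureReal_convPow_singleton hp0 hp1 hμ0 hμ, coeffExpLog_eq_ascPochhammer,
    Real.Gamma_add_nat_eq_ascPochhammer_mul fun k => by linarith [k.cast_nonneg (α := ℝ)],
    Real.rpow_def_of_pos (by linarith)]
  have := Real.Gamma_pos_of_pos hφ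
  field_simp
end
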